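/- Fix a number of trials L ≥ 1 and a callback pattern z ∈ {0,…,L}^2. Let G be a Borel probability measure on [0,1]^2 such that G assigns probability zero to the two points (0,0) and (1,1), f_G(z) > 0, and the quantity Q_− := P_G[p_a = p_b | Z = z]/2 + P_G[p_a < p_b | Z = z] is strictly positive. Then, as L' → ∞, the posterior callback odds ratio θ^odds(G; z, L') converges to (P_G[p_a = p_b | Z = z]/2 + P_G[p_a > p_b | Z = z]) / Q_−. (Proposition 1(c): asymptotics with increasing number of counterfactual applications.) -/

import Mathlib

open MeasureTheory Filter Topology

/-- Binomial probability mass function `b(c; L, p)`. -/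
noncomputable def binomPMF (L c : ℕ) (p : ℝ) : ℝ :=
  (L.choose c : ℝ) * p ^ c * (1 - p) ^ (L - c)

/-- Bivariate binomial likelihood `p(z | θ)` with `L` trials per group. -/
noncomputable def biLik (L : ℕ) (z : ℕ × ℕ) (θ : ℝ × ℝ) : ℝ :=
  binomPMF L z.1 θ.1 * binomPMF L z.2 θ.2

/-- Probability that group a gets strictly more callbacks than group b in `L'` fresh trials. -/
noncomputable def gtKernel (L' : ℕ) (θ : ℝ × ℝ) : ℝ :=
  ∑ cb ∈ Finset.range L', ∑ ca ∈ Finset.Icc (cb + 1) L',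
    binomPMF L' ca θ.1 * binomPMF L' cb θ.2

/-- Probability that group a gets strictly fewer callbacks than group b in `L'` fresh trials. -/
noncomputable def ltKernel (L' : ℕ) (θ : ℝ × ℝ) : ℝ :=
  ∑ cb ∈ Finset.Icc 1 L', ∑ ca ∈ Finset.range cb,
    binomPMF L' ca θ.1 * binomPMF L' cb θ.2

/-- Numerator `N(G; z, L')` of the posterior callback odds ratio. -/
noncomputable def Nval (G : Measure (unitInterval × unitInterval)) (L : ℕ) (z : ℕ × ℕ)
    (L' : ℕ) : ℝ :=
  ∫ θ, gtKernel L' ((θ.1 : ℝ), (θ.2 : ℝ)) * biLik L z ((θ.1 : ℝ), (θ.2 : ℝ)) ∂G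

/-- Denominator `D(G; z, L')` of the posterior callback odds ratio. -/
noncomputable def Dval (G : Measure (unitInterval × unitInterval)) (L : ℕ) (z : ℕ × ℕ)
    (L' : ℕ) : ℝ :=
  ∫ θ, ltKernel L' ((θ.1 : ℝ), (θ.2 : ℝ)) * biLik L z ((θ.1 : ℝ), (θ.2 : ℝ)) ∂G

/-- The posterior callback odds ratio `θ^odds(G; z, L') = N / D`. -/
noncomputable def thetaOdds (G : Measure (unitInterval × unitInterval)) (L : ℕ) (z : ℕ × ℕ)
    (L' : ℕ) : ℝ :=
  Nval G L z L' / Dval G L z L'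


/-- The marginal probability mass function `f_G(z)`. -/
noncomputable def margPMF (G : Measure (unitInterval × unitInterval)) (L : ℕ)
    (z : ℕ × ℕ) : ℝ :=
  ∫ θ, biLik L z ((θ.1 : ℝ), (θ.2 : ℝ)) ∂G

/-- The posterior probability `P_G[(p_a, p_b) ∈ A | Z = z]`. -/
noncomputable def postProb (G : Measure (unitInterval × unitInterval)) (L : ℕ)
    (z : ℕ × ℕ) (A : Set (ℝ × ℝ)) : ℝ :=
  (∫ θ, A.indicator (fun _ => (1 : ℝ)) ((θ.1 : ℝ), (θ.2 : ℝ)) *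
      biLik L z ((θ.1 : ℝ), (θ.2 : ℝ)) ∂G) / margPMF G L z

/-!
The odds ratio is `∫ P_θ(C_a' > C_b') p(z | θ) dG / ∫ P_θ(C_a' < C_b') p(z | θ) dG`. As
`L' → ∞` the kernel `P_θ(C_a' > C_b')` tends to `1` if `p_a > p_b` and to `0` if `p_a < p_b`, by
Chebyshev's inequality applied to both counts; on the diagonal `p_a = p_b = p ∈ (0, 1)` it tends to
`1/2`, because the tie probability of two independent `Bin(n, p)` counts `X, Y` tends to `0`.
For the latter, `X - Y` is a lazy symmetric random walk: `g_k(n) = P(X = Y + k)` satisfies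
`g_k(n+1) = (p² + q²) g_k(n) + p q (g_{k-1}(n) + g_{k+1}(n))` with `g_{-1} = g_1 ≤ g_0`, so `g_0`
decreases to some `l` and, inductively, every `g_k` tends to `l`; since `∑_{k<K} g_k ≤ 1` for all
`K`, `l = 0`. As `G` does not charge `(0,0)` and `(1,1)`, dominated convergence gives the limits of
numerator and denominator, and `f_G(z)` cancels from the quotient of posterior probabilities.
-/

open Finset

theorem sum_range_shift_le {f : ℕ → ℝ} (hf : ∀ i, 0 ≤ f i) (k m : ℕ) :
    ∑ i ∈ range m, f (i + k) ≤ ∑ i ∈ range (k + m), f i := by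
  rw [sum_range_add]
  simp only [add_comm k]
  exact le_add_of_nonneg_left (sum_nonneg fun i _ => hf i)

section Binomial

variable {p : ℝ}

theorem binomPMF_nonneg (hp : p ∈ unitInterval) (n c : ℕ) : 0 ≤ binomPMF n c p := by
  have := hp.1
  have : 0 ≤ 1 - p := sub_nonneg.2 hp.2
  unfold binomPMF
  positivity

theorem binomPMF_eq_zero_of_lt {n c : ℕ} (h : n < c) (p : ℝ) : binomPMF n c p = 0 := by
  simp [binomPMF, Nat.choose_eq_zero_of_lt h]

theorem sum_range_binomPMF (n : ℕ) (p : ℝ) : ∑ c ∈ range (n + 1), binomPMF n c p = 1 := by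
  have h := (add_pow p (1 - p) n).symm
  rw [add_sub_cancel, one_pow] at h
  rw [← h]
  exact sum_congr rfl fun c _ => by unfold binomPMF; ring

theorem sum_binomPMF_le_one (hp : p ∈ unitInterval) (n : ℕ) (s : Finset ℕ) :
    ∑ c ∈ s, binomPMF n c p ≤ 1 :=
  calc ∑ c ∈ s, binomPMF n c p = ∑ c ∈ s ∩ range (n + 1), binomPMF n c p :=
        (sum_subset inter_subset_left fun c hc hc' =>
          binomPMF_eq_zero_of_lt (by simp_all) p).symm
    _ ≤ ∑ c ∈ range (n + 1), binomPMF n c p :=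
        sum_le_sum_of_subset_of_nonneg inter_subset_right fun c _ _ => binomPMF_nonneg hp n c
    _ = 1 := sum_range_binomPMF n p

theorem sum_range_sq_sub_mul_binomPMF (n : ℕ) (p : ℝ) :
    ∑ c ∈ range (n + 1), ((c : ℝ) - n * p) ^ 2 * binomPMF n c p = n * p * (1 - p) := by
  have h := congrArg (Polynomial.eval p) (bernsteinPolynomial.variance (R := ℝ) n)
  simp only [Polynomial.eval_finsetSum, Polynomial.eval_mul, Polynomial.eval_pow,
    Polynomial.eval_sub, Polynomial.eval_natCast, Polynomial.eval_X, Polynomial.eval_one,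
    bernsteinPolynomial, nsmul_eq_mul] at h
  rw [← h]
  exact sum_congr rfl fun c _ => by unfold binomPMF; ring

theorem binomPMF_succ_zero (n : ℕ) (p : ℝ) :
    binomPMF (n + 1) 0 p = (1 - p) * binomPMF n 0 p := by
  simp [binomPMF, pow_succ, mul_comm]

theorem binomPMF_succ_succ (n c : ℕ) (p : ℝ) :
    binomPMF (n + 1) (c + 1) p = p * binomPMF n c p + (1 - p) * binomPMF n (c + 1) p := by
  rcases lt_trichotomy c n with h | rfl | h
  · have e : n - c = n - (c + 1) + 1 := by omega
    simp only [binomPMF, Nat.choose_succ_succ, Nat.cast_add, Nat.add_sub_add_right, e, pow_succ]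
    ring
  · simp [binomPMF, pow_succ]
    ring
  · simp [binomPMF_eq_zero_of_lt, h, Nat.lt_succ_of_lt h]

end Binomial

section Gap

variable {p : ℝ}

noncomputable def binomGapProb (n k : ℕ) (p : ℝ) : ℝ :=
  ∑ c ∈ range (n + 1), binomPMF n (c + k) p * binomPMF n c p

theorem binomGapProb_eq_sum_range {n N : ℕ} (hN : n + 1 ≤ N) (k : ℕ) (p : ℝ) :
    binomGapProb n k p = ∑ c ∈ range N, binomPMF n (c + k) p * binomPMF n c p :=
  sum_subset (range_subset_range.2 hN) fun c _ hc =>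
    mul_eq_zero_of_right _ (binomPMF_eq_zero_of_lt (by simp at hc; omega) p)

theorem binomGapProb_eq_add_sum_succ {n N : ℕ} (hN : n ≤ N) (k : ℕ) (p : ℝ) :
    binomGapProb n k p = binomPMF n k p * binomPMF n 0 p +
      ∑ c ∈ range N, binomPMF n (c + 1 + k) p * binomPMF n (c + 1) p := by
  rw [binomGapProb_eq_sum_range (N := N + 1) (by omega), sum_range_succ', add_comm, zero_add]

theorem binomGapProb_nonneg (hp : p ∈ unitInterval) (n k : ℕ) : 0 ≤ binomGapProb n k p :=
  sum_nonneg fun _ _ => mul_nonneg (binomPMF_nonneg hp _ _) (binomPMF_nonneg hp _ _)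

theorem binomGapProb_le_binomGapProb_zero (n k : ℕ) (p : ℝ) :
    binomGapProb n k p ≤ binomGapProb n 0 p := by
  have hshift : ∑ c ∈ range (n + 1), binomPMF n (c + k) p ^ 2 ≤ binomGapProb n 0 p := by
    rw [binomGapProb_eq_sum_range (N := k + (n + 1)) (by omega)]
    simpa [sq] using sum_range_shift_le (fun c => sq_nonneg (binomPMF n c p)) k (n + 1)
  have hsq : binomGapProb n 0 p = ∑ c ∈ range (n + 1), binomPMF n c p ^ 2 := by
    simp [binomGapProb, sq]
  have hamgm : 2 * binomGapProb n k p ≤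
      ∑ c ∈ range (n + 1), binomPMF n (c + k) p ^ 2 + ∑ c ∈ range (n + 1), binomPMF n c p ^ 2 := by
    rw [binomGapProb, mul_sum, ← sum_add_distrib]
    refine sum_le_sum fun c _ => ?_
    linarith [two_mul_le_add_sq (binomPMF n (c + k) p) (binomPMF n c p)]
  linarith

theorem sum_range_binomPMF_succ_mul (n k : ℕ) (p : ℝ) :
    ∑ c ∈ range (n + 1), binomPMF (n + 1) (c + 1 + k) p * binomPMF (n + 1) (c + 1) p =
      p ^ 2 * binomGapProb n k p +
      p * (1 - p) * ∑ c ∈ range (n + 1), binomPMF n (c + k) p * binomPMF n (c + 1) p +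
      p * (1 - p) * binomGapProb n (k + 1) p +
      (1 - p) ^ 2 * (binomGapProb n k p - binomPMF n k p * binomPMF n 0 p) := by
  rw [← eq_sub_of_add_eq' (binomGapProb_eq_add_sum_succ (Nat.le_succ n) k p).symm]
  simp only [binomGapProb, mul_sum, ← sum_add_distrib]
  refine sum_congr rfl fun c _ => ?_
  rw [add_right_comm c 1 k, binomPMF_succ_succ, binomPMF_succ_succ, ← add_assoc]
  ring

theorem binomGapProb_succ_zero (n : ℕ) (p : ℝ) :
    binomGapProb (n + 1) 0 p =
      (p ^ 2 + (1 - p) ^ 2) * binomGapProb n 0 p + 2 * p * (1 - p) * binomGapProb n 1 p := by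
  have h := sum_range_binomPMF_succ_mul n 0 p
  have hsymm : ∑ c ∈ range (n + 1), binomPMF n (c + 0) p * binomPMF n (c + 1) p =
      binomGapProb n 1 p := sum_congr rfl fun c _ => by rw [add_zero, mul_comm]
  rw [binomGapProb_eq_add_sum_succ le_rfl, h, hsymm, binomPMF_succ_zero]
  ring

theorem binomGapProb_succ_succ (n j : ℕ) (p : ℝ) :
    binomGapProb (n + 1) (j + 1) p = (p ^ 2 + (1 - p) ^ 2) * binomGapProb n (j + 1) p +
      p * (1 - p) * (binomGapProb n j p + binomGapProb n (j + 2) p) := by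
  have h := sum_range_binomPMF_succ_mul n (j + 1) p
  have hback : ∑ c ∈ range (n + 1), binomPMF n (c + (j + 1)) p * binomPMF n (c + 1) p =
      binomGapProb n j p - binomPMF n j p * binomPMF n 0 p := by
    rw [binomGapProb_eq_add_sum_succ (Nat.le_succ n) j, add_sub_cancel_left]
    exact sum_congr rfl fun c _ => by rw [add_right_comm c 1 j, add_assoc]
  rw [binomGapProb_eq_add_sum_succ le_rfl, h, hback, binomPMF_succ_zero, binomPMF_succ_succ]
  ring

theorem sum_binomGapProb_le_one (hp : p ∈ unitInterval) (K n : ℕ) :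
    ∑ k ∈ range K, binomGapProb n k p ≤ 1 := by
  have hswap : ∑ k ∈ range K, binomGapProb n k p =
      ∑ c ∈ range (n + 1), (∑ k ∈ range K, binomPMF n (k + c) p) * binomPMF n c p := by
    simp only [binomGapProb, sum_mul]
    rw [sum_comm]
    exact sum_congr rfl fun c _ => sum_congr rfl fun k _ => by rw [add_comm k c]
  calc ∑ k ∈ range K, binomGapProb n k p
      ≤ ∑ c ∈ range (n + 1), 1 * binomPMF n c p := by
        rw [hswap]
        refine sum_le_sum fun c _ => mul_le_mul_of_nonneg_right ?_ (binomPMF_nonneg hp n c)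
        exact (sum_range_shift_le (fun i => binomPMF_nonneg hp n i) c K).trans
          (sum_binomPMF_le_one hp n _)
    _ = 1 := by simp [sum_range_binomPMF]

theorem antitone_binomGapProb_zero (hp : p ∈ unitInterval) :
    Antitone fun n => binomGapProb n 0 p := by
  refine antitone_nat_of_succ_le fun n => ?_
  have h1 := binomGapProb_le_binomGapProb_zero n 1 p
  have hpq : 0 ≤ 2 * p * (1 - p) := by have := hp.1; have := sub_nonneg.2 hp.2; positivity
  rw [binomGapProb_succ_zero]
  nlinarith

theorem tendsto_binomGapProb (hp : p ∈ Set.Ioo 0 1) {l : ℝ}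
    (hl : Tendsto (fun n => binomGapProb n 0 p) atTop (𝓝 l)) (k : ℕ) :
    Tendsto (fun n => binomGapProb n k p) atTop (𝓝 l) := by
  have hpq : p * (1 - p) ≠ 0 := mul_ne_zero hp.1.ne' (sub_ne_zero.2 hp.2.ne')
  induction k using Nat.twoStepInduction with
  | zero => exact hl
  | one =>
    have h := ((hl.comp (tendsto_add_atTop_nat 1)).sub
      (hl.const_mul (p ^ 2 + (1 - p) ^ 2))).div_const (2 * (p * (1 - p)))
    rw [show (l - (p ^ 2 + (1 - p) ^ 2) * l) / (2 * (p * (1 - p))) = l by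
      rw [div_eq_iff (by simpa using hpq)]; ring] at h
    refine h.congr fun n => ?_
    rw [Function.comp_apply, binomGapProb_succ_zero, div_eq_iff (by simpa using hpq)]
    ring
  | more j hj hj1 =>
    have h := (((hj1.comp (tendsto_add_atTop_nat 1)).sub
      (hj1.const_mul (p ^ 2 + (1 - p) ^ 2))).div_const (p * (1 - p))).sub hj
    rw [show (l - (p ^ 2 + (1 - p) ^ 2) * l) / (p * (1 - p)) - l = l by
      rw [sub_eq_iff_eq_add, div_eq_iff hpq]; ring] at h
    refine h.congr fun n => ?_
    rw [Function.comp_apply, binomGapProb_succ_succ, sub_eq_iff_eq_add, div_eq_iff hpq]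
    ring

theorem tendsto_binomGapProb_zero_zero (hp : p ∈ Set.Ioo 0 1) :
    Tendsto (fun n => binomGapProb n 0 p) atTop (𝓝 0) := by
  have hp' : p ∈ unitInterval := Set.Ioo_subset_Icc_self hp
  obtain ⟨l, hl⟩ : ∃ l, Tendsto (fun n => binomGapProb n 0 p) atTop (𝓝 l) :=
    ⟨_, tendsto_atTop_ciInf (antitone_binomGapProb_zero hp')
      ⟨0, by rintro _ ⟨n, rfl⟩; exact binomGapProb_nonneg hp' n 0⟩⟩
  have hl0 : 0 ≤ l := ge_of_tendsto' hl fun n => binomGapProb_nonneg hp' n 0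
  have hKl : ∀ K : ℕ, K * l ≤ 1 := fun K => by
    simpa using le_of_tendsto' (tendsto_finsetSum (range K) fun k _ => tendsto_binomGapProb hp hl k)
      fun n => sum_binomGapProb_le_one hp' K n
  obtain rfl : l = 0 := by
    by_contra hne
    obtain ⟨K, hK⟩ := exists_nat_gt (1 / l)
    rw [div_lt_iff₀ (lt_of_le_of_ne hl0 (Ne.symm hne))] at hK
    linarith [hKl K]
  exact hl

end Gap

section Kernels

noncomputable def eqKernel (n : ℕ) (θ : ℝ × ℝ) : ℝ :=
  ∑ c ∈ range (n + 1), binomPMF n c θ.1 * binomPMF n c θ.2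

theorem ltKernel_eq_gtKernel_swap (n : ℕ) (θ : ℝ × ℝ) : ltKernel n θ = gtKernel n θ.swap := by
  unfold ltKernel gtKernel
  rw [sum_comm' (t' := range n) (s' := fun ca => Icc (ca + 1) n)]
  · exact sum_congr rfl fun _ _ => sum_congr rfl fun _ _ => mul_comm _ _
  · intro cb ca
    simp only [mem_Icc, mem_range]
    omega

theorem gtKernel_eq_sum_ite (n : ℕ) (θ : ℝ × ℝ) :
    gtKernel n θ = ∑ cb ∈ range (n + 1), ∑ ca ∈ range (n + 1),
      if cb < ca then binomPMF n ca θ.1 * binomPMF n cb θ.2 else 0 := by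
  rw [sum_range_succ, sum_eq_zero fun ca hca => if_neg (by simp at hca; omega), add_zero]
  refine sum_congr rfl fun cb _ => ?_
  rw [← sum_filter]
  congr 1
  ext ca
  simp only [mem_Icc, mem_filter, mem_range]
  omega

theorem ltKernel_eq_sum_ite (n : ℕ) (θ : ℝ × ℝ) :
    ltKernel n θ = ∑ cb ∈ range (n + 1), ∑ ca ∈ range (n + 1),
      if ca < cb then binomPMF n ca θ.1 * binomPMF n cb θ.2 else 0 := by
  rw [ltKernel_eq_gtKernel_swap, gtKernel_eq_sum_ite, sum_comm]
  simp only [Prod.fst_swap, Prod.snd_swap, mul_comm (binomPMF n _ θ.2)]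

theorem eqKernel_eq_sum_ite (n : ℕ) (θ : ℝ × ℝ) :
    eqKernel n θ = ∑ cb ∈ range (n + 1), ∑ ca ∈ range (n + 1),
      if ca = cb then binomPMF n ca θ.1 * binomPMF n cb θ.2 else 0 :=
  sum_congr rfl fun cb hcb => by rw [sum_ite_eq', if_pos hcb]

theorem gtKernel_add_ltKernel_add_eqKernel (n : ℕ) (θ : ℝ × ℝ) :
    gtKernel n θ + ltKernel n θ + eqKernel n θ = 1 := by
  have htotal : ∑ cb ∈ range (n + 1), ∑ ca ∈ range (n + 1),
      binomPMF n ca θ.1 * binomPMF n cb θ.2 = 1 := by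
    simp [← sum_mul, sum_range_binomPMF]
  rw [gtKernel_eq_sum_ite, ltKernel_eq_sum_ite, eqKernel_eq_sum_ite, ← sum_add_distrib,
    ← sum_add_distrib, ← htotal]
  refine sum_congr rfl fun cb _ => ?_
  rw [← sum_add_distrib, ← sum_add_distrib]
  refine sum_congr rfl fun ca _ => ?_
  split_ifs <;> first | omega | ring

section Bounds

variable {a b : ℝ}

theorem gtKernel_nonneg (ha : a ∈ unitInterval) (hb : b ∈ unitInterval) (n : ℕ) :
    0 ≤ gtKernel n (a, b) :=
  sum_nonneg fun _ _ => sum_nonneg fun _ _ =>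
    mul_nonneg (binomPMF_nonneg ha _ _) (binomPMF_nonneg hb _ _)

theorem ltKernel_nonneg (ha : a ∈ unitInterval) (hb : b ∈ unitInterval) (n : ℕ) :
    0 ≤ ltKernel n (a, b) := by
  rw [ltKernel_eq_gtKernel_swap]
  exact gtKernel_nonneg hb ha n

theorem eqKernel_nonneg (ha : a ∈ unitInterval) (hb : b ∈ unitInterval) (n : ℕ) :
    0 ≤ eqKernel n (a, b) :=
  sum_nonneg fun _ _ => mul_nonneg (binomPMF_nonneg ha _ _) (binomPMF_nonneg hb _ _)

theorem abs_gtKernel_le_one (ha : a ∈ unitInterval) (hb : b ∈ unitInterval) (n : ℕ) :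
    |gtKernel n (a, b)| ≤ 1 := by
  rw [abs_of_nonneg (gtKernel_nonneg ha hb n)]
  linarith [gtKernel_add_ltKernel_add_eqKernel n (a, b), ltKernel_nonneg ha hb n,
    eqKernel_nonneg ha hb n]

theorem abs_ltKernel_le_one (ha : a ∈ unitInterval) (hb : b ∈ unitInterval) (n : ℕ) :
    |ltKernel n (a, b)| ≤ 1 := by
  rw [ltKernel_eq_gtKernel_swap]
  exact abs_gtKernel_le_one hb ha n

theorem sum_sum_sq_dev_mul_binomPMF (n : ℕ) (a b : ℝ) :
    ∑ cb ∈ range (n + 1), ∑ ca ∈ range (n + 1),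
      (((ca : ℝ) - n * a) ^ 2 + ((cb : ℝ) - n * b) ^ 2) * (binomPMF n ca a * binomPMF n cb b) =
      n * a * (1 - a) + n * b * (1 - b) := by
  have h : ∀ ca cb : ℕ,
      (((ca : ℝ) - n * a) ^ 2 + ((cb : ℝ) - n * b) ^ 2) * (binomPMF n ca a * binomPMF n cb b) =
        binomPMF n cb b * (((ca : ℝ) - n * a) ^ 2 * binomPMF n ca a) +
          ((cb : ℝ) - n * b) ^ 2 * binomPMF n cb b * binomPMF n ca a :=
    fun _ _ => by ring
  simp only [h, sum_add_distrib, ← sum_mul_sum, sum_range_sq_sub_mul_binomPMF,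
    sum_range_binomPMF]
  ring

/-- Chebyshev's inequality for the pair of counts: `ca ≤ cb` forces
`(n a - ca) + (cb - n b) ≥ n (a - b)`. -/
theorem ltKernel_add_eqKernel_le (ha : a ∈ unitInterval) (hb : b ∈ unitInterval) (hba : b < a)
    {n : ℕ} (hn : 0 < n) : ltKernel n (a, b) + eqKernel n (a, b) ≤ 1 / (a - b) ^ 2 / n := by
  have hn' : (0 : ℝ) < n := Nat.cast_pos.2 hn
  have hd : 0 < (n * (a - b)) ^ 2 := by have := sub_pos.2 hba; positivity
  have hdev : ∀ ca cb : ℕ, (if ca ≤ cb then binomPMF n ca a * binomPMF n cb b else 0) ≤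
      2 / (n * (a - b)) ^ 2 * ((((ca : ℝ) - n * a) ^ 2 + ((cb : ℝ) - n * b) ^ 2) *
        (binomPMF n ca a * binomPMF n cb b)) := by
    intro ca cb
    have hP := mul_nonneg (binomPMF_nonneg ha n ca) (binomPMF_nonneg hb n cb)
    split_ifs with h
    · have hcc : (ca : ℝ) ≤ cb := Nat.cast_le.2 h
      have hsq : (n * (a - b)) ^ 2 ≤ 2 * (((ca : ℝ) - n * a) ^ 2 + ((cb : ℝ) - n * b) ^ 2) := by
        nlinarith [sq_nonneg ((ca : ℝ) - n * a + (cb - n * b)), mul_pos hn' (sub_pos.2 hba)]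
      rw [← mul_assoc, div_mul_eq_mul_div]
      refine le_mul_of_one_le_left hP ?_
      rwa [one_le_div hd]
    · positivity
  calc ltKernel n (a, b) + eqKernel n (a, b)
      = ∑ cb ∈ range (n + 1), ∑ ca ∈ range (n + 1),
          if ca ≤ cb then binomPMF n ca a * binomPMF n cb b else 0 := by
        rw [ltKernel_eq_sum_ite, eqKernel_eq_sum_ite, ← sum_add_distrib]
        refine sum_congr rfl fun cb _ => ?_
        rw [← sum_add_distrib]
        refine sum_congr rfl fun ca _ => ?_
        split_ifs <;> first | omega | simp
    _ ≤ 2 / (n * (a - b)) ^ 2 * (n * a * (1 - a) + n * b * (1 - b)) := by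
        rw [← sum_sum_sq_dev_mul_binomPMF, mul_sum]
        exact sum_le_sum fun cb _ => by rw [mul_sum]; exact sum_le_sum fun ca _ => hdev ca cb
    _ ≤ 1 / (a - b) ^ 2 / n := by
        rw [div_div, div_mul_eq_mul_div, div_le_div_iff₀ hd (by positivity)]
        nlinarith [sq_nonneg (a - 1 / 2), sq_nonneg (b - 1 / 2)]

end Bounds

end Kernels

section Limits

variable {a b : ℝ}

theorem tendsto_ltKernel_add_eqKernel_of_lt (ha : a ∈ unitInterval) (hb : b ∈ unitInterval)
    (hba : b < a) : Tendsto (fun n => ltKernel n (a, b) + eqKernel n (a, b)) atTop (𝓝 0) :=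
  squeeze_zero'
    (Eventually.of_forall fun n => add_nonneg (ltKernel_nonneg ha hb n) (eqKernel_nonneg ha hb n))
    ((eventually_gt_atTop 0).mono fun _ hn => ltKernel_add_eqKernel_le ha hb hba hn)
    (tendsto_const_div_atTop_nhds_zero_nat _)

theorem tendsto_gtKernel_of_lt (ha : a ∈ unitInterval) (hb : b ∈ unitInterval) (hba : b < a) :
    Tendsto (fun n => gtKernel n (a, b)) atTop (𝓝 1) := by
  have h := (tendsto_ltKernel_add_eqKernel_of_lt ha hb hba).const_sub 1
  rw [sub_zero] at h
  exact h.congr fun n => by linarith [gtKernel_add_ltKernel_add_eqKernel n (a, b)]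

theorem tendsto_ltKernel_of_lt (ha : a ∈ unitInterval) (hb : b ∈ unitInterval) (hba : b < a) :
    Tendsto (fun n => ltKernel n (a, b)) atTop (𝓝 0) :=
  squeeze_zero (fun n => ltKernel_nonneg ha hb n)
    (fun n => le_add_of_nonneg_right (eqKernel_nonneg ha hb n))
    (tendsto_ltKernel_add_eqKernel_of_lt ha hb hba)

theorem tendsto_gtKernel_diag {p : ℝ} (hp : p ∈ Set.Ioo 0 1) :
    Tendsto (fun n => gtKernel n (p, p)) atTop (𝓝 (1 / 2)) := by
  have h := ((tendsto_binomGapProb_zero_zero hp).const_sub 1).div_const 2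
  rw [sub_zero] at h
  refine h.congr fun n => ?_
  have htotal := gtKernel_add_ltKernel_add_eqKernel n (p, p)
  rw [ltKernel_eq_gtKernel_swap, Prod.swap_prod_mk] at htotal
  have htie : eqKernel n (p, p) = binomGapProb n 0 p := rfl
  linarith

theorem tendsto_gtKernel (ha : a ∈ unitInterval) (hb : b ∈ unitInterval)
    (hdiag : a = b → a ∈ Set.Ioo 0 1) :
    Tendsto (fun n => gtKernel n (a, b)) atTop
      (𝓝 ({p : ℝ × ℝ | p.1 = p.2}.indicator (fun _ => (1 : ℝ)) (a, b) / 2 +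
        {p : ℝ × ℝ | p.1 > p.2}.indicator (fun _ => (1 : ℝ)) (a, b))) := by
  rcases lt_trichotomy a b with h | rfl | h
  · simpa [h.ne, h.not_gt] using
      (tendsto_ltKernel_of_lt hb ha h).congr fun n => ltKernel_eq_gtKernel_swap n (b, a)
  · simpa using tendsto_gtKernel_diag (hdiag rfl)
  · simpa [h.ne', h] using tendsto_gtKernel_of_lt ha hb h

theorem tendsto_ltKernel (ha : a ∈ unitInterval) (hb : b ∈ unitInterval)
    (hdiag : a = b → a ∈ Set.Ioo 0 1) :
    Tendsto (fun n => ltKernel n (a, b)) atTop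
      (𝓝 ({p : ℝ × ℝ | p.1 = p.2}.indicator (fun _ => (1 : ℝ)) (a, b) / 2 +
        {p : ℝ × ℝ | p.1 < p.2}.indicator (fun _ => (1 : ℝ)) (a, b))) := by
  have h := tendsto_gtKernel hb ha fun hba => hba ▸ hdiag hba.symm
  simp only [ltKernel_eq_gtKernel_swap, Prod.swap_prod_mk]
  convert h using 2
  simp [Set.indicator, eq_comm]

end Limits

section Posterior

theorem tendsto_integral_mul_of_abs_le_one {α : Type*} [MeasurableSpace α] {μ : Measure α}
    {K : ℕ → α → ℝ} {k F : α → ℝ} (hK : ∀ n, AEStronglyMeasurable (K n) μ)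
    (hK1 : ∀ n, ∀ᵐ x ∂μ, |K n x| ≤ 1) (hF : Integrable F μ)
    (hlim : ∀ᵐ x ∂μ, Tendsto (fun n => K n x) atTop (𝓝 (k x))) :
    Tendsto (fun n => ∫ x, K n x * F x ∂μ) atTop (𝓝 (∫ x, k x * F x ∂μ)) :=
  tendsto_integral_of_dominated_convergence (fun x => ‖F x‖) (fun n => (hK n).mul hF.1) hF.norm
    (fun n => (hK1 n).mono fun x hx => by
      rw [norm_mul]
      exact mul_le_of_le_one_left (norm_nonneg _) hx)
    (hlim.mono fun _ hx => hx.mul_const _)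

noncomputable def postMass (G : Measure (unitInterval × unitInterval)) (L : ℕ) (z : ℕ × ℕ)
    (A : Set (ℝ × ℝ)) : ℝ :=
  ∫ θ, A.indicator (fun _ => (1 : ℝ)) ((θ.1 : ℝ), (θ.2 : ℝ)) *
    biLik L z ((θ.1 : ℝ), (θ.2 : ℝ)) ∂G

theorem postProb_eq_postMass_div (G : Measure (unitInterval × unitInterval)) (L : ℕ)
    (z : ℕ × ℕ) (A : Set (ℝ × ℝ)) : postProb G L z A = postMass G L z A / margPMF G L z :=
  rfl

theorem continuous_biLik (L : ℕ) (z : ℕ × ℕ) : Continuous (biLik L z) := by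
  unfold biLik binomPMF
  fun_prop

theorem continuous_gtKernel (n : ℕ) : Continuous (gtKernel n) := by
  unfold gtKernel binomPMF
  fun_prop

theorem continuous_ltKernel (n : ℕ) : Continuous (ltKernel n) := by
  unfold ltKernel binomPMF
  fun_prop

variable {G : Measure (unitInterval × unitInterval)}

theorem ae_diag_mem_Ioo (hcorner : G {((0 : unitInterval), (0 : unitInterval)),
      ((1 : unitInterval), (1 : unitInterval))} = 0) :
    ∀ᵐ θ ∂G, (θ.1 : ℝ) = θ.2 → (θ.1 : ℝ) ∈ Set.Ioo 0 1 := by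
  filter_upwards [measure_eq_zero_iff_ae_notMem.1 hcorner]
  rintro ⟨⟨a, ha⟩, ⟨b, hb⟩⟩ hθ (rfl : a = b)
  simp only [Set.mem_insert_iff, Set.mem_singleton_iff, Prod.mk.injEq, and_self, not_or,
    Subtype.ext_iff, Set.Icc.coe_zero, Set.Icc.coe_one] at hθ
  exact ⟨lt_of_le_of_ne ha.1 (Ne.symm hθ.1), lt_of_le_of_ne ha.2 hθ.2⟩

variable [IsFiniteMeasure G] (L : ℕ) (z : ℕ × ℕ)

theorem tendsto_integral_mul_biLik {K : ℕ → ℝ × ℝ → ℝ} (hK : ∀ n, Continuous (K n))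
    (hK1 : ∀ n (θ : unitInterval × unitInterval), |K n ((θ.1 : ℝ), (θ.2 : ℝ))| ≤ 1)
    {s t : Set (ℝ × ℝ)} (hs : MeasurableSet s) (ht : MeasurableSet t)
    (hlim : ∀ᵐ θ ∂G, Tendsto (fun n => K n ((θ.1 : ℝ), (θ.2 : ℝ))) atTop
      (𝓝 (s.indicator (fun _ => 1) ((θ.1 : ℝ), (θ.2 : ℝ)) / 2 +
        t.indicator (fun _ => 1) ((θ.1 : ℝ), (θ.2 : ℝ))))) :
    Tendsto (fun n => ∫ θ, K n ((θ.1 : ℝ), (θ.2 : ℝ)) * biLik L z ((θ.1 : ℝ), (θ.2 : ℝ)) ∂G)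
      atTop (𝓝 (postMass G L z s / 2 + postMass G L z t)) := by
  have hφ : Continuous fun θ : unitInterval × unitInterval => ((θ.1 : ℝ), (θ.2 : ℝ)) := by
    fun_prop
  have hF : Integrable (fun θ : unitInterval × unitInterval =>
      biLik L z ((θ.1 : ℝ), (θ.2 : ℝ))) G :=
    ((continuous_biLik L z).comp hφ).integrable_of_hasCompactSupport
      (HasCompactSupport.of_compactSpace _)
  have hind : ∀ A : Set (ℝ × ℝ), MeasurableSet A →
      Integrable (fun θ : unitInterval × unitInterval =>
      A.indicator (fun _ => (1 : ℝ)) ((θ.1 : ℝ), (θ.2 : ℝ)) * biLik L z ((θ.1 : ℝ), (θ.2 : ℝ))) G :=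
    fun A hA => hF.bdd_mul ((measurable_const.indicator hA).comp hφ.measurable).aestronglyMeasurable
      (c := 1) (ae_of_all _ fun θ => by simp only [Set.indicator]; split_ifs <;> simp)
  have hlimit : ∫ θ, (s.indicator (fun _ => 1) ((θ.1 : ℝ), (θ.2 : ℝ)) / 2 +
      t.indicator (fun _ => 1) ((θ.1 : ℝ), (θ.2 : ℝ))) * biLik L z ((θ.1 : ℝ), (θ.2 : ℝ)) ∂G =
      postMass G L z s / 2 + postMass G L z t := by
    simp only [add_mul, div_mul_eq_mul_div]
    rw [integral_add ((hind s hs).div_const 2) (hind t ht), integral_div]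
    rfl
  rw [← hlimit]
  exact tendsto_integral_mul_of_abs_le_one (fun n => ((hK n).comp hφ).aestronglyMeasurable)
    (fun n => ae_of_all _ (hK1 n)) hF hlim

end Posterior

theorem odds_ratio_limit_infinite_applications_general
    (L : ℕ) (z : ℕ × ℕ)
    (G : Measure (unitInterval × unitInterval)) [IsProbabilityMeasure G]
    (hcorner : G ({((0 : unitInterval), (0 : unitInterval)),
        ((1 : unitInterval), (1 : unitInterval))} : Set (unitInterval × unitInterval)) = 0)
    (hQ : 0 < postProb G L z {p | p.1 = p.2} / 2 + postProb G L z {p | p.1 < p.2}) :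
    Tendsto (fun L' => thetaOdds G L z L') atTop
      (𝓝 ((postProb G L z {p | p.1 = p.2} / 2 + postProb G L z {p | p.1 > p.2}) /
          (postProb G L z {p | p.1 = p.2} / 2 + postProb G L z {p | p.1 < p.2}))) := by
  have hdiag := ae_diag_mem_Ioo hcorner
  have hdiagSet : MeasurableSet {p : ℝ × ℝ | p.1 = p.2} :=
    measurableSet_eq_fun measurable_fst measurable_snd
  have hN : Tendsto (Nval G L z) atTop
      (𝓝 (postMass G L z {p | p.1 = p.2} / 2 + postMass G L z {p | p.1 > p.2})) :=
    tendsto_integral_mul_biLik L z continuous_gtKernel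
      (fun n θ => abs_gtKernel_le_one θ.1.2 θ.2.2 n) hdiagSet
      (measurableSet_lt measurable_snd measurable_fst)
      (hdiag.mono fun θ h => tendsto_gtKernel θ.1.2 θ.2.2 h)
  have hD : Tendsto (Dval G L z) atTop
      (𝓝 (postMass G L z {p | p.1 = p.2} / 2 + postMass G L z {p | p.1 < p.2})) :=
    tendsto_integral_mul_biLik L z continuous_ltKernel
      (fun n θ => abs_ltKernel_le_one θ.1.2 θ.2.2 n) hdiagSet
      (measurableSet_lt measurable_fst measurable_snd)
      (hdiag.mono fun θ h => tendsto_ltKernel θ.1.2 θ.2.2 h)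
  obtain ⟨hD0, hf0⟩ : postMass G L z {p | p.1 = p.2} / 2 + postMass G L z {p | p.1 < p.2} ≠ 0 ∧
      margPMF G L z ≠ 0 := by
    rw [← div_ne_zero_iff, add_div, div_right_comm, ← postProb_eq_postMass_div,
      ← postProb_eq_postMass_div]
    exact hQ.ne'
  simp only [postProb_eq_postMass_div, div_right_comm _ (margPMF G L z) 2, ← add_div,
    div_div_div_cancel_right₀ hf0]
  exact hN.div hD hD0

/-- Proposition 1(c): as `L' → ∞`, the posterior callback odds ratio converges to
the dampened ratio of posterior discrimination probabilities. -/
theorem odds_ratio_limit_infinite_applications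
    (L : ℕ) (hL : 1 ≤ L) (z : ℕ × ℕ) (hz : z.1 ≤ L ∧ z.2 ≤ L)
    (G : Measure (unitInterval × unitInterval)) [IsProbabilityMeasure G]
    (hcorner : G ({((0 : unitInterval), (0 : unitInterval)),
        ((1 : unitInterval), (1 : unitInterval))} : Set (unitInterval × unitInterval)) = 0)
    (hf : 0 < margPMF G L z)
    (hQ : 0 < postProb G L z {p | p.1 = p.2} / 2 + postProb G L z {p | p.1 < p.2}) :
    Tendsto (fun L' => thetaOdds G L z L') atTop
      (𝓝 ((postProb G L z {p | p.1 = p.2} / 2 + postProb G L z {p | p.1 > p.2}) /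
          (postProb G L z {p | p.1 = p.2} / 2 + postProb G L z {p | p.1 < p.2}))) :=
  odds_ratio_limit_infinite_applications_general L z G hcorner hQ
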